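/- Let d ≥ 1 be an integer, α ∈ (1,2], γ > 0, and σ ∈ (0, α−1). Then there is a constant C, depending only on d, α, γ, σ, such that for every y ∈ ℝ^d ∖ {0}: ∫_{ℝ^d} ( ∑_{j ∈ ℤ} 2^{jσ} · M_j(x,y) · (|x| · |y|)^{σ/2} ) dx ≤ C, where for j ∈ ℤ and x, y ∈ ℝ^d: M_j(x,y) = 1_{|y| ≥ 2^{−j}} · 1_{|x−y| ≤ min(|x|,|y|)/2} · ( 2^{j} · max(|x|,|y|) )^{1−α} · 2^{jd} · ( 1 + 2^{j} |x−y| )^{−(d+γ)}. -/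
import Mathlib


open MeasureTheory ENNReal
open scoped ENNReal

/-- The dyadic kernel `M_j(x,y) = 1_{|y| ≥ 2^{−j}} 1_{|x−y| ≤ min(|x|,|y|)/2}
(2^j max(|x|,|y|))^{1−α} 2^{jd} (1 + 2^j |x−y|)^{−(d+γ)}`. -/
noncomputable def Mker (d : ℕ) (α γ : ℝ) (j : ℤ) (x y : EuclideanSpace ℝ (Fin d)) : ℝ :=
  if (2 : ℝ) ^ (-(j : ℝ)) ≤ ‖y‖ ∧ ‖x - y‖ ≤ min ‖x‖ ‖y‖ / 2 then
    ((2 : ℝ) ^ (j : ℝ) * max ‖x‖ ‖y‖) ^ (1 - α) * (2 : ℝ) ^ ((j : ℝ) * d) *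
      (1 + (2 : ℝ) ^ (j : ℝ) * ‖x - y‖) ^ (-((d : ℝ) + γ))
  else 0

private lemma scale_int (d : ℕ) (γ : ℝ) (c : ℝ) (hc : 0 < c) (y : EuclideanSpace ℝ (Fin d)) :
    ∫⁻ x : EuclideanSpace ℝ (Fin d),
      ENNReal.ofReal (c ^ (d : ℝ) * (1 + c * ‖x - y‖) ^ (-((d : ℝ) + γ))) =
    ∫⁻ x : EuclideanSpace ℝ (Fin d), ENNReal.ofReal ((1 + ‖x‖) ^ (-((d : ℝ) + γ))) := by
  have hmeas : Measurable fun x : EuclideanSpace ℝ (Fin d) =>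
      ENNReal.ofReal ((1 + ‖x‖) ^ (-((d : ℝ) + γ))) := by fun_prop
  have hcd : (0:ℝ) < c ^ (d : ℝ) := Real.rpow_pos_of_pos hc _
  have hfr : Module.finrank ℝ (EuclideanSpace ℝ (Fin d)) = d := finrank_euclideanSpace_fin
  calc ∫⁻ x : EuclideanSpace ℝ (Fin d),
        ENNReal.ofReal (c ^ (d : ℝ) * (1 + c * ‖x - y‖) ^ (-((d : ℝ) + γ)))
      = ENNReal.ofReal (c ^ (d : ℝ)) * ∫⁻ x : EuclideanSpace ℝ (Fin d),
        ENNReal.ofReal ((1 + c * ‖x - y‖) ^ (-((d : ℝ) + γ))) := by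
        simp_rw [ENNReal.ofReal_mul hcd.le]
        exact lintegral_const_mul' _ _ ENNReal.ofReal_ne_top
    _ = ENNReal.ofReal (c ^ (d : ℝ)) * ∫⁻ x : EuclideanSpace ℝ (Fin d),
        ENNReal.ofReal ((1 + c * ‖x‖) ^ (-((d : ℝ) + γ))) := by
        congr 1
        exact (measurePreserving_sub_right volume y).lintegral_comp
          (f := fun x => ENNReal.ofReal ((1 + c * ‖x‖) ^ (-((d : ℝ) + γ)))) (by fun_prop)
    _ = ENNReal.ofReal (c ^ (d : ℝ)) * ∫⁻ x : EuclideanSpace ℝ (Fin d),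
        ENNReal.ofReal ((1 + ‖c • x‖) ^ (-((d : ℝ) + γ))) := by
        congr 1; refine lintegral_congr fun x => ?_
        rw [norm_smul, Real.norm_eq_abs, abs_of_pos hc]
    _ = ENNReal.ofReal (c ^ (d : ℝ)) *
        (ENNReal.ofReal (|(c ^ d : ℝ)|⁻¹) *
        ∫⁻ x : EuclideanSpace ℝ (Fin d), ENNReal.ofReal ((1 + ‖x‖) ^ (-((d : ℝ) + γ)))) := by
        congr 1
        rw [← lintegral_map hmeas (measurable_const_smul c),
          MeasureTheory.Measure.map_addHaar_smul volume hc.ne', lintegral_smul_measure, hfr]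
        simp [abs_inv]
    _ = _ := by
        rw [← mul_assoc, abs_of_pos (pow_pos hc d),
          ← Real.rpow_natCast c d, ← ENNReal.ofReal_mul hcd.le,
          mul_inv_cancel₀ hcd.ne', ENNReal.ofReal_one, one_mul]

private lemma meas_term (d : ℕ) (α γ σ : ℝ) (j : ℤ) (y : EuclideanSpace ℝ (Fin d)) :
    Measurable fun x : EuclideanSpace ℝ (Fin d) =>
      ENNReal.ofReal ((2 : ℝ) ^ ((j : ℝ) * σ) * Mker d α γ j x y * (‖x‖ * ‖y‖) ^ (σ / 2)) := by
  apply Measurable.ennreal_ofReal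
  apply Measurable.mul
  · apply Measurable.mul measurable_const
    unfold Mker
    apply Measurable.ite
    · rcases le_or_gt ((2 : ℝ) ^ (-(j : ℝ))) ‖y‖ with h | h
      · simp only [h, true_and]
        exact measurableSet_le (by fun_prop) (by fun_prop)
      · simp only [h.not_ge, false_and]; exact MeasurableSet.empty
    · fun_prop
    · exact measurable_const
  · fun_prop

private lemma ptwise (d : ℕ) (α γ σ : ℝ) (hα1 : 1 < α) (hσ1 : 0 < σ)
    (j : ℤ) (x y : EuclideanSpace ℝ (Fin d)) :
    ENNReal.ofReal ((2 : ℝ) ^ ((j : ℝ) * σ) * Mker d α γ j x y * (‖x‖ * ‖y‖) ^ (σ / 2)) ≤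
      ENNReal.ofReal ((3 / 2 : ℝ) ^ (σ / 2)) *
      (if (2 : ℝ) ^ (-(j : ℝ)) ≤ ‖y‖ then
          ENNReal.ofReal (((2 : ℝ) ^ (j : ℝ) * ‖y‖) ^ (σ + 1 - α)) else 0) *
      ENNReal.ofReal ((2 : ℝ) ^ ((j : ℝ) * d) *
        (1 + (2 : ℝ) ^ (j : ℝ) * ‖x - y‖) ^ (-((d : ℝ) + γ))) := by
  unfold Mker
  by_cases hcond : (2 : ℝ) ^ (-(j : ℝ)) ≤ ‖y‖ ∧ ‖x - y‖ ≤ min ‖x‖ ‖y‖ / 2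
  · obtain ⟨h1, h2⟩ := hcond
    rw [if_pos ⟨h1, h2⟩, if_pos h1]
    have h2j : (0:ℝ) < (2:ℝ) ^ (j:ℝ) := Real.rpow_pos_of_pos two_pos _
    have hy : (0:ℝ) < ‖y‖ := lt_of_lt_of_le (Real.rpow_pos_of_pos two_pos _) h1
    have hxy : ‖x - y‖ ≤ ‖y‖ / 2 := h2.trans (by
      have := min_le_right ‖x‖ ‖y‖; linarith)
    have hx32 : ‖x‖ ≤ 3 / 2 * ‖y‖ := by
      have h := norm_sub_norm_le x y
      linarith
    set P := (2:ℝ) ^ ((j:ℝ) * σ) with hP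
    set B := (1 + (2:ℝ) ^ (j:ℝ) * ‖x - y‖) ^ (-((d:ℝ) + γ)) with hB
    set D := (2:ℝ) ^ ((j:ℝ) * (d:ℝ)) with hD
    set Q := ((2:ℝ) ^ (j:ℝ) * max ‖x‖ ‖y‖) ^ (1 - α) with hQdef
    set m := (‖x‖ * ‖y‖) ^ (σ / 2) with hm
    have hBpos : (0:ℝ) ≤ B := Real.rpow_nonneg (by positivity) _
    have hDpos : (0:ℝ) < D := Real.rpow_pos_of_pos two_pos _
    have hQle : Q ≤ ((2:ℝ) ^ (j:ℝ) * ‖y‖) ^ (1 - α) := by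
      apply Real.rpow_le_rpow_of_nonpos (by positivity) ?_ (by linarith)
      exact mul_le_mul_of_nonneg_left (le_max_right _ _) h2j.le
    have hmle : m ≤ (3/2 : ℝ) ^ (σ/2) * ‖y‖ ^ σ := by
      have step1 : m ≤ ((3/2 : ℝ) * (‖y‖ * ‖y‖)) ^ (σ / 2) := by
        apply Real.rpow_le_rpow (by positivity) ?_ (by positivity)
        nlinarith
      have step2 : ((3/2 : ℝ) * (‖y‖ * ‖y‖)) ^ (σ / 2)
          = (3/2 : ℝ) ^ (σ/2) * ‖y‖ ^ σ := by
        rw [Real.mul_rpow (by norm_num) (by positivity),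
          Real.mul_rpow hy.le hy.le, ← Real.rpow_add hy, add_halves]
      rw [step2] at step1; exact step1
    have key : P * Q * m ≤ (3/2 : ℝ) ^ (σ/2) * ((2:ℝ) ^ (j:ℝ) * ‖y‖) ^ (σ + 1 - α) := by
      have h3 : P * Q * m ≤ P * (((2:ℝ) ^ (j:ℝ) * ‖y‖) ^ (1 - α)) *
          ((3/2 : ℝ) ^ (σ/2) * ‖y‖ ^ σ) := by
        have hPpos : (0:ℝ) < P := Real.rpow_pos_of_pos two_pos _
        have hQ0 : (0:ℝ) ≤ Q := Real.rpow_nonneg (by positivity) _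
        have hm0 : (0:ℝ) ≤ m := Real.rpow_nonneg (by positivity) _
        gcongr
      refine h3.trans (le_of_eq ?_)
      have e1 : P = ((2:ℝ) ^ ((j:ℝ))) ^ σ := Real.rpow_mul (by norm_num) _ _
      have e2 : ((2:ℝ) ^ (j:ℝ) * ‖y‖) ^ (σ + 1 - α)
          = (((2:ℝ) ^ (j:ℝ)) ^ σ * ‖y‖ ^ σ) * ((2:ℝ) ^ (j:ℝ) * ‖y‖) ^ (1 - α) := by
        rw [show σ + 1 - α = σ + (1 - α) by ring, Real.rpow_add (by positivity),
          Real.mul_rpow h2j.le hy.le]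
      rw [e1, e2]; ring
    rw [← ENNReal.ofReal_mul (by positivity), ← ENNReal.ofReal_mul (by positivity)]
    apply ENNReal.ofReal_le_ofReal
    calc P * (Q * D * B) * m = (P * Q * m) * (D * B) := by ring
      _ ≤ ((3/2 : ℝ) ^ (σ/2) * ((2:ℝ) ^ (j:ℝ) * ‖y‖) ^ (σ + 1 - α)) * (D * B) := by
          apply mul_le_mul_of_nonneg_right key (by positivity)
      _ = _ := by ring
  · rw [if_neg hcond]
    simp

private lemma sum_bfac (d : ℕ) (α σ : ℝ) (hσ2 : σ < α - 1)
    (y : EuclideanSpace ℝ (Fin d)) (hy : y ≠ 0) :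
    (∑' j : ℤ, (if (2 : ℝ) ^ (-(j : ℝ)) ≤ ‖y‖ then
        ENNReal.ofReal (((2 : ℝ) ^ (j : ℝ) * ‖y‖) ^ (σ + 1 - α)) else 0))
      ≤ (1 - ENNReal.ofReal ((2:ℝ) ^ (σ + 1 - α)))⁻¹ := by
  have hy' : (0:ℝ) < ‖y‖ := norm_pos_iff.2 hy
  set j0 : ℤ := -Int.log 2 ‖y‖ with hj0
  have hrpow_int : ∀ j : ℤ, (2:ℝ) ^ (-(j:ℝ)) = (2:ℝ) ^ (-j : ℤ) := by
    intro j
    rw [← Real.rpow_intCast (2:ℝ) (-j)]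
    norm_num
  have hcond_iff : ∀ j : ℤ, ((2:ℝ) ^ (-(j:ℝ)) ≤ ‖y‖ ↔ j0 ≤ j) := by
    intro j
    rw [hrpow_int j, show ((2:ℝ)) = ((2:ℕ):ℝ) by norm_num,
      Int.zpow_le_iff_le_log one_lt_two hy', hj0]
    omega
  have hj0y : (1:ℝ) ≤ (2:ℝ) ^ ((j0:ℝ)) * ‖y‖ := by
    have h := Int.zpow_log_le_self (b := 2) (r := ‖y‖) one_lt_two hy'
    have h2 : (2:ℝ) ^ (-(j0:ℝ)) ≤ ‖y‖ := by
      rw [hrpow_int j0]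
      simpa [hj0] using h
    have hp : (0:ℝ) < (2:ℝ) ^ ((j0:ℝ)) := Real.rpow_pos_of_pos two_pos _
    rw [Real.rpow_neg (by norm_num)] at h2
    rw [show (1:ℝ) = (2:ℝ) ^ ((j0:ℝ)) * ((2:ℝ) ^ ((j0:ℝ)))⁻¹ from (mul_inv_cancel₀ hp.ne').symm]
    exact mul_le_mul_of_nonneg_left (by simpa using h2) hp.le
  set f : ℤ → ℝ≥0∞ := fun j => (if (2 : ℝ) ^ (-(j : ℝ)) ≤ ‖y‖ then
      ENNReal.ofReal (((2 : ℝ) ^ (j : ℝ) * ‖y‖) ^ (σ + 1 - α)) else 0) with hf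
  have hi : Function.Injective (fun k : ℕ => j0 + (k:ℤ)) := fun a b h => by
    simp only at h; omega
  have hsupp : Function.support f ⊆ Set.range (fun k : ℕ => j0 + (k:ℤ)) := by
    intro j hj
    have : (2 : ℝ) ^ (-(j : ℝ)) ≤ ‖y‖ := by
      by_contra hc
      exact hj (if_neg hc)
    have hle : j0 ≤ j := (hcond_iff j).1 this
    exact ⟨(j - j0).toNat, by simp; omega⟩
  rw [← Function.Injective.tsum_eq hi hsupp]
  set r : ℝ≥0∞ := ENNReal.ofReal ((2:ℝ) ^ (σ + 1 - α)) with hr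
  have hbound : ∀ k : ℕ, f (j0 + (k:ℤ)) ≤ r ^ k := by
    intro k
    have hcond : (2 : ℝ) ^ (-((j0 + (k:ℤ) : ℤ) : ℝ)) ≤ ‖y‖ := by
      rw [hcond_iff]; omega
    have h2k : (0:ℝ) < (2:ℝ) ^ ((k:ℝ)) := Real.rpow_pos_of_pos two_pos _
    have hge : (2:ℝ) ^ ((k:ℝ)) ≤ (2:ℝ) ^ (((j0 + (k:ℤ) : ℤ)):ℝ) * ‖y‖ := by
      have : (((j0 + (k:ℤ) : ℤ)):ℝ) = (j0:ℝ) + (k:ℝ) := by push_cast; ring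
      rw [this, Real.rpow_add two_pos]
      calc (2:ℝ) ^ ((k:ℝ)) = 1 * (2:ℝ) ^ ((k:ℝ)) := (one_mul _).symm
        _ ≤ ((2:ℝ) ^ ((j0:ℝ)) * ‖y‖) * (2:ℝ) ^ ((k:ℝ)) :=
            mul_le_mul_of_nonneg_right hj0y h2k.le
        _ = (2:ℝ) ^ ((j0:ℝ)) * (2:ℝ) ^ ((k:ℝ)) * ‖y‖ := by ring
    have hle : (((2 : ℝ) ^ (((j0 + (k:ℤ) : ℤ)) : ℝ) * ‖y‖) ^ (σ + 1 - α))
        ≤ ((2:ℝ) ^ ((k:ℝ))) ^ (σ + 1 - α) :=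
      Real.rpow_le_rpow_of_nonpos h2k hge (by linarith)
    have heq : ((2:ℝ) ^ ((k:ℝ))) ^ (σ + 1 - α) = ((2:ℝ) ^ (σ + 1 - α)) ^ k := by
      rw [← Real.rpow_natCast ((2:ℝ) ^ (σ + 1 - α)) k, ← Real.rpow_mul (by norm_num),
        ← Real.rpow_mul (by norm_num), mul_comm]
    rw [hf]
    simp only [hcond, if_pos]
    calc ENNReal.ofReal (((2 : ℝ) ^ (((j0 + (k:ℤ) : ℤ)) : ℝ) * ‖y‖) ^ (σ + 1 - α))
        ≤ ENNReal.ofReal (((2:ℝ) ^ (σ + 1 - α)) ^ k) := by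
          apply ENNReal.ofReal_le_ofReal; rw [← heq]; exact hle
      _ = r ^ k := by rw [hr, ENNReal.ofReal_pow (by positivity)]
  calc ∑' k : ℕ, f (j0 + (k:ℤ)) ≤ ∑' k : ℕ, r ^ k := ENNReal.tsum_le_tsum hbound
    _ = (1 - r)⁻¹ := ENNReal.tsum_geometric r

/-- Schur-test bound for the dyadic sum of the kernels `M_j` weighted by `(|x||y|)^{σ/2}`:
for `σ ∈ (0, α−1)` one has `∫ ∑_{j ∈ ℤ} 2^{jσ} M_j(x,y) (|x||y|)^{σ/2} dx ≤ C`, uniformly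
in `y ≠ 0`. -/
theorem schur_test_dyadic_M_kernels
    (d : ℕ) (hd : 1 ≤ d) (α γ σ : ℝ)
    (hα1 : 1 < α) (hα2 : α ≤ 2) (hγ : 0 < γ) (hσ1 : 0 < σ) (hσ2 : σ < α - 1) :
    ∃ C : ℝ, 0 < C ∧
      ∀ y : EuclideanSpace ℝ (Fin d), y ≠ 0 →
        (∫⁻ x, ∑' j : ℤ, ENNReal.ofReal
            ((2 : ℝ) ^ ((j : ℝ) * σ) * Mker d α γ j x y * (‖x‖ * ‖y‖) ^ (σ / 2)))
          ≤ ENNReal.ofReal C := by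
  set A : ℝ≥0∞ := ∫⁻ x : EuclideanSpace ℝ (Fin d),
    ENNReal.ofReal ((1 + ‖x‖) ^ (-((d : ℝ) + γ))) with hA
  have hAfin : A < ⊤ := by
    apply finite_integral_one_add_norm
    rw [finrank_euclideanSpace_fin]
    linarith
  set r : ℝ≥0∞ := ENNReal.ofReal ((2:ℝ) ^ (σ + 1 - α)) with hr
  have hrlt : r < 1 := by
    rw [hr, ← ENNReal.ofReal_one]
    exact ENNReal.ofReal_lt_ofReal_iff_of_nonneg (by positivity) |>.2
      (Real.rpow_lt_one_of_one_lt_of_neg one_lt_two (by linarith))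
  set G : ℝ≥0∞ := (1 - r)⁻¹ with hG
  have hGfin : G ≠ ⊤ := by
    rw [hG, ENNReal.inv_ne_top]
    exact (tsub_pos_of_lt hrlt).ne'
  set c2 : ℝ≥0∞ := ENNReal.ofReal ((3 / 2 : ℝ) ^ (σ / 2)) with hc2
  set K : ℝ≥0∞ := c2 * G * A with hK
  have hKfin : K ≠ ⊤ :=
    ENNReal.mul_ne_top (ENNReal.mul_ne_top ENNReal.ofReal_ne_top hGfin) hAfin.ne
  refine ⟨K.toReal + 1, by positivity, fun y hy => ?_⟩
  have hle : (∫⁻ x, ∑' j : ℤ, ENNReal.ofReal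
      ((2 : ℝ) ^ ((j : ℝ) * σ) * Mker d α γ j x y * (‖x‖ * ‖y‖) ^ (σ / 2))) ≤ K := by
    rw [lintegral_tsum (fun j => (meas_term d α γ σ j y).aemeasurable)]
    have hjint : ∀ j : ℤ,
        (∫⁻ x, ENNReal.ofReal
          ((2 : ℝ) ^ ((j : ℝ) * σ) * Mker d α γ j x y * (‖x‖ * ‖y‖) ^ (σ / 2)))
        ≤ c2 * (if (2 : ℝ) ^ (-(j : ℝ)) ≤ ‖y‖ then
            ENNReal.ofReal (((2 : ℝ) ^ (j : ℝ) * ‖y‖) ^ (σ + 1 - α)) else 0) * A := by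
      intro j
      calc (∫⁻ x, ENNReal.ofReal
            ((2 : ℝ) ^ ((j : ℝ) * σ) * Mker d α γ j x y * (‖x‖ * ‖y‖) ^ (σ / 2)))
          ≤ ∫⁻ x, c2 * (if (2 : ℝ) ^ (-(j : ℝ)) ≤ ‖y‖ then
              ENNReal.ofReal (((2 : ℝ) ^ (j : ℝ) * ‖y‖) ^ (σ + 1 - α)) else 0) *
            ENNReal.ofReal ((2 : ℝ) ^ ((j : ℝ) * d) *
              (1 + (2 : ℝ) ^ (j : ℝ) * ‖x - y‖) ^ (-((d : ℝ) + γ))) :=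
            lintegral_mono fun x => ptwise d α γ σ hα1 hσ1 j x y
        _ = c2 * (if (2 : ℝ) ^ (-(j : ℝ)) ≤ ‖y‖ then
              ENNReal.ofReal (((2 : ℝ) ^ (j : ℝ) * ‖y‖) ^ (σ + 1 - α)) else 0) *
            ∫⁻ x, ENNReal.ofReal ((2 : ℝ) ^ ((j : ℝ) * d) *
              (1 + (2 : ℝ) ^ (j : ℝ) * ‖x - y‖) ^ (-((d : ℝ) + γ))) := by
            apply lintegral_const_mul'
            apply ENNReal.mul_ne_top ENNReal.ofReal_ne_top
            split <;> simp
        _ = c2 * (if (2 : ℝ) ^ (-(j : ℝ)) ≤ ‖y‖ then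
              ENNReal.ofReal (((2 : ℝ) ^ (j : ℝ) * ‖y‖) ^ (σ + 1 - α)) else 0) * A := by
            congr 1
            have hrw : ∀ x : EuclideanSpace ℝ (Fin d),
                (2 : ℝ) ^ ((j : ℝ) * d) *
                  (1 + (2 : ℝ) ^ (j : ℝ) * ‖x - y‖) ^ (-((d : ℝ) + γ))
                = ((2:ℝ) ^ (j:ℝ)) ^ (d : ℝ) *
                  (1 + (2 : ℝ) ^ (j : ℝ) * ‖x - y‖) ^ (-((d : ℝ) + γ)) := by
              intro x
              rw [← Real.rpow_mul (by norm_num)]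
            simp_rw [hrw]
            exact scale_int d γ _ (Real.rpow_pos_of_pos two_pos _) y
    calc (∑' j : ℤ, ∫⁻ x, ENNReal.ofReal
          ((2 : ℝ) ^ ((j : ℝ) * σ) * Mker d α γ j x y * (‖x‖ * ‖y‖) ^ (σ / 2)))
        ≤ ∑' j : ℤ, c2 * (if (2 : ℝ) ^ (-(j : ℝ)) ≤ ‖y‖ then
            ENNReal.ofReal (((2 : ℝ) ^ (j : ℝ) * ‖y‖) ^ (σ + 1 - α)) else 0) * A :=
          ENNReal.tsum_le_tsum hjint
      _ = c2 * A * ∑' j : ℤ, (if (2 : ℝ) ^ (-(j : ℝ)) ≤ ‖y‖ then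
            ENNReal.ofReal (((2 : ℝ) ^ (j : ℝ) * ‖y‖) ^ (σ + 1 - α)) else 0) := by
          rw [← ENNReal.tsum_mul_left]
          congr 1; funext j; ring
      _ ≤ c2 * A * G := mul_le_mul_right (sum_bfac d α σ hσ2 y hy) _
      _ = K := by rw [hK]; ring
  refine hle.trans ?_
  conv_lhs => rw [← ENNReal.ofReal_toReal hKfin]
  exact ENNReal.ofReal_le_ofReal (by linarith [ENNReal.toReal_nonneg (a := K)])
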